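/- arXiv:2006.15225 — 2 statements merged into one kernel-verified Lean document; each statement's English description precedes it below -/
import Mathlib

section
/- For all integers n ≥ 3 and 2 ≤ K ≤ n−1, the affine hull of RCut^{=K}_n is the hyperplane {X ∈ ℝ^{n(n−1)/2} : ∑_{1≤i<j≤n} X_{ij} = (n−K)/2}; in particular dim(RCut^{=K}_n) = n(n−1)/2 − 1. -/
/-- Index set for the pairs `1 ≤ i < j ≤ n`. -/
abbrev PairIdx (n : ℕ) := {p : Fin n × Fin n // p.1 < p.2}

/-- The space `ℝ^{n(n-1)/2}` of vectors indexed by pairs `i < j`. -/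
abbrev CutSpace (n : ℕ) := PairIdx n → ℝ

/-- The ratio-cut vector of the partition of `[n]` induced by the cluster
assignment `c : Fin n → Fin K` (such assignments describe exactly the partitions
of `[n]` into at most `K` nonempty clusters): the entry at a pair `i < j` is
`1/|Γ|` if `i, j` lie in the same cluster `Γ` and `0` otherwise. -/
noncomputable def cutVec (n K : ℕ) (c : Fin n → Fin K) : CutSpace n := fun p =>
  if c p.1.1 = c p.1.2 then
    (1 : ℝ) / ((Finset.univ.filter fun i => c i = c p.1.1).card : ℝ)
  else 0

/-- The ratio-cut polytope `RCut^K_n`: convex hull of the ratio-cut vectors of all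
partitions of `[n]` into at most `K` nonempty clusters. -/
def RCut (n K : ℕ) : Set (CutSpace n) :=
  convexHull ℝ {X | ∃ c : Fin n → Fin K, X = cutVec n K c}

/-- `RCut^{=K}_n`: convex hull of the ratio-cut vectors of all partitions of `[n]`
into exactly `K` nonempty clusters (i.e. surjective cluster assignments). -/
def RCutEq (n K : ℕ) : Set (CutSpace n) :=
  convexHull ℝ {X | ∃ c : Fin n → Fin K, Function.Surjective c ∧ X = cutVec n K c}

/-- Symmetric entry access: `ent X i j = X_{ij}` for `i ≠ j`, with `X_{ji} = X_{ij}`. -/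
noncomputable def ent {n : ℕ} (X : CutSpace n) (i j : Fin n) : ℝ :=
  if h : i < j then X ⟨(i, j), h⟩ else if h' : j < i then X ⟨(j, i), h'⟩ else 0

/-- `∑_{i,j ∈ T, i < j} X_{ij}`. -/
noncomputable def pairSumOn {n : ℕ} (X : CutSpace n) (T : Finset (Fin n)) : ℝ :=
  ∑ p : PairIdx n, if p.1.1 ∈ T ∧ p.1.2 ∈ T then X p else 0

/-- The polyhedral relaxation `RMet^K_n` of the ratio-cut polytope, cut out by the
facet-defining inequalities of Propositions 2-4 of the paper. -/
def RMet (n K : ℕ) : Set (CutSpace n) :=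
  {X | ((n : ℝ) - K) / 2 ≤ ∑ p : PairIdx n, X p ∧
    (∀ l : Fin n, ∀ T : Finset (Fin n), l ∉ T → 2 ≤ T.card → T.card ≤ K →
      2 * ∑ j ∈ T, ent X l j + ∑ j ∈ Finset.univ \ insert l T, ent X l j
        ≤ 1 + pairSumOn X T) ∧
    ∀ p : PairIdx n, 0 ≤ X p}

/-- The polyhedral relaxation `RMet^{=K}_n`: same constraints as `RMet^K_n` with the
first inequality replaced by an equality. -/
def RMetEq (n K : ℕ) : Set (CutSpace n) :=
  {X | (∑ p : PairIdx n, X p = ((n : ℝ) - K) / 2) ∧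
    (∀ l : Fin n, ∀ T : Finset (Fin n), l ∉ T → 2 ≤ T.card → T.card ≤ K →
      2 * ∑ j ∈ T, ent X l j + ∑ j ∈ Finset.univ \ insert l T, ent X l j
        ≤ 1 + pairSumOn X T) ∧
    ∀ p : PairIdx n, 0 ≤ X p}

/-
The ratio-cut vector of a partition into `K` clusters has coordinate sum
`∑_Γ (|Γ| - 1) / 2 = (n - K) / 2`, so `RCut^{=K}_n` lies in the hyperplane. Conversely,
exchanging two points `j, k` between their clusters changes the ratio-cut vector by
`∑_{x ∉ {j, k}} (w_{jx} - w_{kx}) (e_{jx} - e_{kx})`, where `w_{ab} = 1/|Γ|` if `a, b` share the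
cluster `Γ` and `0` otherwise. With clusters `{i, j}`, `{k}` and `K - 2`
further ones (possible as `K ≤ n - 1`) this is `(e_{ij} - e_{ik}) / 2`; for `K = 2` a combination
of two such exchanges gives the same. Differences of unit vectors of pairs sharing a point connect
any two pairs, so they span the whole sum-zero hyperplane.
-/

open Finset

theorem Finset.sum_sum_eq_two_nsmul_sum_lt_add_sum_diag {ι M : Type*} [Fintype ι]
    [LinearOrder ι] [AddCommMonoid M] (g : ι → ι → M) (hg : ∀ i j, g i j = g j i) :
    ∑ i, ∑ j, g i j = 2 • ∑ p : {p : ι × ι // p.1 < p.2}, g p.1.1 p.1.2 + ∑ i, g i i := by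
  have hsplit : ∀ i j, g i j =
      ((if i < j then g i j else 0) + if j < i then g i j else 0) + if i = j then g i j else 0 := by
    intro i j
    rcases lt_trichotomy i j with h | rfl | h
    · simp [h, lt_asymm h, ne_of_lt h]
    · simp
    · simp [h, lt_asymm h, ne_of_gt h]
  have hlt : ∑ i, ∑ j, (if i < j then g i j else 0) =
      ∑ p : {p : ι × ι // p.1 < p.2}, g p.1.1 p.1.2 := by
    rw [← Fintype.sum_prod_type' (f := fun i j => if i < j then g i j else 0),
      ← Finset.sum_filter, Finset.sum_subtype]
    simp
  have hgt : ∑ i, ∑ j, (if j < i then g i j else 0) =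
      ∑ i, ∑ j, (if i < j then g i j else 0) := by
    rw [Finset.sum_comm]; simp_rw [hg]
  conv_lhs => enter [2, i, 2, j]; rw [hsplit i j]
  simp only [Finset.sum_add_distrib, hgt, hlt, Finset.sum_ite_eq, Finset.mem_univ, if_true,
    two_nsmul]

theorem Submodule.mem_of_sum_eq_zero {ι R : Type*} [Fintype ι] [DecidableEq ι] [Ring R]
    {V : Submodule R (ι → R)} (hV : ∀ p q, Pi.single p 1 - Pi.single q 1 ∈ V) {Y : ι → R}
    (hY : ∑ p, Y p = 0) : Y ∈ V := by
  cases isEmpty_or_nonempty ι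
  · simp [Subsingleton.elim Y 0]
  obtain ⟨q⟩ := ‹Nonempty ι›
  have hY' : Y = ∑ p, Y p • (Pi.single p 1 - Pi.single q 1 : ι → R) := by
    simp only [smul_sub, Finset.sum_sub_distrib, ← Finset.sum_smul, hY, zero_smul, sub_zero]
    ext i; simp [Pi.single_apply]
  rw [hY']
  exact V.sum_mem fun p _ => V.smul_mem _ (hV p q)

lemma Submodule.mem_of_sum_ite_smul_mem {α k M : Type*} [DecidableEq α] [DivisionRing k]
    [AddCommGroup M] [Module k M] {V : Submodule k M} {T : Finset α} {i : α} (hi : i ∈ T)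
    {t : k} (ht : t ≠ 0) {v : α → M} (h : ∑ x ∈ T, (if x = i then t else 0) • v x ∈ V) :
    v i ∈ V := by
  simp only [ite_smul, zero_smul, Finset.sum_ite_eq', hi, if_true] at h
  simpa [ht] using V.smul_mem t⁻¹ h

def coordSum (R ι : Type*) [Semiring R] [Fintype ι] : (ι → R) →ₗ[R] R :=
  ∑ i, LinearMap.proj i

lemma coordSum_apply {R ι : Type*} [Semiring R] [Fintype ι] (X : ι → R) :
    coordSum R ι X = ∑ i, X i := by
  simp [coordSum]

lemma finrank_ker_coordSum (k ι : Type*) [Field k] [Fintype ι] [Nonempty ι] :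
    Module.finrank k (LinearMap.ker (coordSum k ι)) = Fintype.card ι - 1 := by
  classical
  obtain ⟨i⟩ := ‹Nonempty ι›
  have hne : coordSum k ι ≠ 0 := fun h => by
    simpa [coordSum_apply] using LinearMap.congr_fun h (Pi.single i 1)
  have := Module.Dual.finrank_ker_add_one_of_ne_zero hne
  rw [Module.finrank_fintype_fun_eq_card] at this
  omega

theorem AffineSubspace.coe_affineSpan_eq_of_vectorSpan_eq_ker {k V W : Type*} [Ring k]
    [AddCommGroup V] [Module k V] [AddCommGroup W] [Module k W] (f : V →ₗ[k] W) {s : Set V}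
    {x : V} (hx : x ∈ s) (hs : vectorSpan k s = LinearMap.ker f) :
    (affineSpan k s : Set V) = {y | f y = f x} := by
  ext y
  rw [SetLike.mem_coe, ← vsub_right_mem_direction_iff_mem (mem_affineSpan k hx),
    direction_affineSpan, hs, LinearMap.mem_ker, vsub_eq_sub, map_sub, sub_eq_zero]
  rfl

lemma Fin.exists_surjective_of_le {n K : ℕ} (hK : 0 < K) (hKn : K ≤ n) :
    ∃ c : Fin n → Fin K, c.Surjective :=
  have : Nonempty (Fin K) := ⟨⟨0, hK⟩⟩
  ⟨_, Function.invFun_surjective (Fin.castLE_injective hKn)⟩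

section clusterWeight

variable {α β : Type*} [Fintype α] [DecidableEq β]

noncomputable def clusterWeight (c : α → β) (a b : α) : ℝ :=
  if c a = c b then 1 / (#{x | c x = c a} : ℝ) else 0

lemma clusterWeight_comm (c : α → β) (a b : α) :
    clusterWeight c a b = clusterWeight c b a := by
  by_cases h : c a = c b
  · simp [clusterWeight, h]
  · simp [clusterWeight, h, Ne.symm h]

lemma clusterWeight_comp_perm (c : α → β) (σ : Equiv.Perm α) (a b : α) :
    clusterWeight (c ∘ σ) a b = clusterWeight c (σ a) (σ b) := by
  have hcard : #{x | c (σ x) = c (σ a)} = #{x | c x = c (σ a)} :=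
    Finset.card_equiv σ (by simp)
  simp [clusterWeight, hcard]

lemma sum_clusterWeight_left (c : α → β) (a : α) : ∑ b, clusterWeight c a b = 1 := by
  have hpos : (0 : ℝ) < #{x | c x = c a} := by
    exact_mod_cast Finset.card_pos.2 ⟨a, by simp⟩
  simp only [clusterWeight, ← Finset.sum_filter, Finset.sum_const, nsmul_eq_mul]
  simp_rw [eq_comm (a := c a)]
  field_simp

lemma sum_clusterWeight_self [Fintype β] {c : α → β} (hc : c.Surjective) :
    ∑ a, clusterWeight c a a = Fintype.card β := by
  simp only [clusterWeight, if_true]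
  rw [← Finset.sum_fiberwise_of_maps_to (g := c) (t := univ) (fun _ _ => Finset.mem_univ _)]
  have hfiber : ∀ v, ∑ a ∈ {a | c a = v}, 1 / (#{x | c x = c a} : ℝ) = 1 := by
    intro v
    obtain ⟨a, rfl⟩ := hc v
    have hpos : (0 : ℝ) < #{x | c x = c a} := by
      exact_mod_cast Finset.card_pos.2 ⟨a, by simp⟩
    rw [Finset.sum_congr rfl fun b hb => by rw [(Finset.mem_filter.1 hb).2], Finset.sum_const,
      nsmul_eq_mul]
    field_simp
  rw [Finset.sum_congr rfl fun v _ => hfiber v]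
  simp

lemma clusterWeight_eq_of_fiber_eq [DecidableEq α] {c : α → β} {a : α} {S : Finset α}
    (hS : ({y | c y = c a} : Finset α) = S) (b : α) :
    clusterWeight c a b = if b ∈ S then 1 / (#S : ℝ) else 0 := by
  subst hS
  simp [clusterWeight, eq_comm]

end clusterWeight

lemma cutVec_apply {n K : ℕ} (c : Fin n → Fin K) (p : PairIdx n) :
    cutVec n K c p = clusterWeight c p.1.1 p.1.2 := rfl

lemma sum_cutVec {n K : ℕ} {c : Fin n → Fin K} (hc : c.Surjective) :
    ∑ p, cutVec n K c p = ((n : ℝ) - K) / 2 := by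
  have h := Finset.sum_sum_eq_two_nsmul_sum_lt_add_sum_diag (clusterWeight c)
    (clusterWeight_comm c)
  simp only [sum_clusterWeight_left, sum_clusterWeight_self hc, Fintype.card_fin,
    Finset.sum_const, Finset.card_univ, nsmul_eq_mul] at h
  simp only [cutVec_apply]
  push_cast at h
  linarith

lemma card_pairIdx (n : ℕ) : Fintype.card (PairIdx n) = n * (n - 1) / 2 := by
  rw [Fintype.card_subtype, Fintype.card_product_filter_lt, Fintype.card_fin,
    Nat.choose_two_right]

noncomputable def pairVec {n : ℕ} (a b : Fin n) : CutSpace n := fun p =>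
  if s(p.1.1, p.1.2) = s(a, b) then 1 else 0

lemma pairVec_comm {n : ℕ} (a b : Fin n) : pairVec a b = pairVec b a := by
  ext p
  simp only [pairVec, Sym2.eq_swap (a := a)]

lemma pairVec_eq_single {n : ℕ} (q : PairIdx n) : pairVec q.1.1 q.1.2 = Pi.single q 1 := by
  ext p
  have hp := p.2
  have hq := q.2
  by_cases h : p = q
  · simp [pairVec, h]
  · rw [Pi.single_eq_of_ne h, pairVec, if_neg]
    rw [Sym2.eq_iff]
    rintro (⟨h1, h2⟩ | ⟨h1, h2⟩)
    · exact h (Subtype.ext (Prod.ext h1 h2))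
    · rw [h1, h2] at hp; exact lt_asymm hp hq

lemma cutVec_sub_cutVec_comp_swap {n K : ℕ} (c : Fin n → Fin K) (j k : Fin n) :
    cutVec n K c - cutVec n K (c ∘ Equiv.swap j k) =
      ∑ x ∈ {j, k}ᶜ,
        (clusterWeight c j x - clusterWeight c k x) • (pairVec j x - pairVec k x) := by
  ext ⟨⟨a, b⟩, hab⟩
  simp only [Pi.sub_apply, cutVec_apply, clusterWeight_comp_perm, Finset.sum_apply,
    Pi.smul_apply, smul_eq_mul, pairVec]
  by_cases hjk : s(a, b) = s(j, k)
  · rw [Finset.sum_eq_zero fun x hx => ?_]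
    · rcases Sym2.eq_iff.1 hjk with ⟨rfl, rfl⟩ | ⟨rfl, rfl⟩ <;>
        simp [clusterWeight_comm c a]
    · rw [Finset.mem_compl, Finset.mem_insert, Finset.mem_singleton, not_or] at hx
      simp [hjk, Ne.symm hx.1, Ne.symm hx.2]
  have hne : a ≠ b := ne_of_lt hab
  simp only [Sym2.eq_iff, not_or, not_and] at hjk ⊢
  rcases eq_or_ne a j with haj | haj <;> rcases eq_or_ne a k with hak | hak <;>
    rcases eq_or_ne b j with hbj | hbj <;> rcases eq_or_ne b k with hbk | hbk <;>
    simp_all [Equiv.swap_apply_of_ne_of_ne, clusterWeight_comm c a]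

section twoClusters

variable {α : Type*} [DecidableEq α]

def twoClusters (S : Finset α) : α → Fin 2 := fun x => if x ∈ S then 0 else 1

lemma twoClusters_surjective {S : Finset α} {a b : α} (ha : a ∈ S) (hb : b ∉ S) :
    (twoClusters S).Surjective := by
  intro v
  fin_cases v
  exacts [⟨a, by simp [twoClusters, ha]⟩, ⟨b, by simp [twoClusters, hb]⟩]

lemma filter_twoClusters_eq_of_mem [Fintype α] {S : Finset α} {a : α} (ha : a ∈ S) :
    ({y | twoClusters S y = twoClusters S a} : Finset α) = S := by
  ext y; by_cases hy : y ∈ S <;> simp [twoClusters, ha, hy]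

lemma filter_twoClusters_eq_of_notMem [Fintype α] {S : Finset α} {a : α} (ha : a ∉ S) :
    ({y | twoClusters S y = twoClusters S a} : Finset α) = Sᶜ := by
  ext y; by_cases hy : y ∈ S <;> simp [twoClusters, ha, hy]

end twoClusters

def ratioCutVerts (n K : ℕ) : Set (CutSpace n) :=
  {X | ∃ c : Fin n → Fin K, c.Surjective ∧ X = cutVec n K c}

lemma RCutEq_eq_convexHull (n K : ℕ) : RCutEq n K = convexHull ℝ (ratioCutVerts n K) := rfl

section vectorSpan

variable {n K : ℕ}

lemma sum_smul_pairVec_mem_vectorSpan {c : Fin n → Fin K} (hc : c.Surjective) (j k : Fin n) :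
    ∑ x ∈ {j, k}ᶜ, (clusterWeight c j x - clusterWeight c k x) • (pairVec j x - pairVec k x) ∈
      vectorSpan ℝ (ratioCutVerts n K) := by
  rw [← cutVec_sub_cutVec_comp_swap]
  exact vsub_mem_vectorSpan ℝ ⟨c, hc, rfl⟩ ⟨_, hc.comp (Equiv.swap j k).surjective, rfl⟩

lemma pairVec_sub_pairVec_mem_vectorSpan_of_three_le (hK : 3 ≤ K) (hKn : K ≤ n - 1)
    {i j k : Fin n} (hij : i ≠ j) (hik : i ≠ k) (hjk : j ≠ k) :
    pairVec j i - pairVec k i ∈ vectorSpan ℝ (ratioCutVerts n K) := by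
  obtain ⟨m, rfl⟩ : ∃ m, K = m + 3 := ⟨K - 3, by omega⟩
  obtain ⟨e⟩ : Nonempty (Fin (m + 1) ↪ ({i, j, k}ᶜ : Finset (Fin n))) := by
    apply Function.Embedding.nonempty_of_card_le
    rw [Fintype.card_fin, Fintype.card_coe, Finset.card_compl, Fintype.card_fin,
      Finset.card_eq_three.2 ⟨i, j, k, hij, hik, hjk, rfl⟩]
    omega
  have he (t) : (e t : Fin n) ≠ i ∧ (e t : Fin n) ≠ j ∧ (e t : Fin n) ≠ k := by
    simpa [not_or] using (e t).2
  set f := Function.invFun fun t => (e t : Fin n)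
  have hf (t) : f (e t) = t :=
    Function.leftInverse_invFun (fun _ _ h => e.injective (Subtype.ext h)) t
  let c : Fin n → Fin (m + 3) := fun x =>
    if x = i ∨ x = j then 0 else if x = k then 1 else (f x).succ.succ
  have hc : c.Surjective := by
    intro v
    refine Fin.cases ⟨i, by simp [c]⟩ (fun w => Fin.cases ⟨k, ?_⟩ (fun t => ⟨e t, ?_⟩) w) v
    · simp [c, hik.symm, hjk.symm]
    · simp [c, he t, hf]
  have hj : ({y | c y = c j} : Finset (Fin n)) = {i, j} := by
    ext y
    by_cases hy : y = k <;> by_cases hy' : y = i <;> simp [c, hy, hy', hik.symm, hjk.symm]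
  have hk : ({y | c y = c k} : Finset (Fin n)) = {k} := by
    ext y
    by_cases hy : y = k <;> by_cases hy' : y = i ∨ y = j <;>
      simp [c, hy, hy', hik.symm, hjk.symm, Fin.succ_succ_ne_one]
  refine Submodule.mem_of_sum_ite_smul_mem (T := ({j, k}ᶜ : Finset (Fin n))) (i := i)
    (by simp [hij, hik]) (t := (1 / 2 : ℝ)) (by norm_num)
    (v := fun x => pairVec j x - pairVec k x) ?_
  convert sum_smul_pairVec_mem_vectorSpan hc j k using 3 with x hx
  simp only [Finset.mem_compl, Finset.mem_insert, Finset.mem_singleton, not_or] at hx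
  rw [clusterWeight_eq_of_fiber_eq hj, clusterWeight_eq_of_fiber_eq hk, Finset.card_pair hij]
  simp [hx.1, hx.2]

lemma pairVec_sub_pairVec_mem_vectorSpan_two {i j k : Fin n} (hij : i ≠ j) (hik : i ≠ k)
    (hjk : j ≠ k) : pairVec j i - pairVec k i ∈ vectorSpan ℝ (ratioCutVerts n 2) := by
  have hn : 3 ≤ n := by
    simpa [Finset.card_eq_three.2 ⟨i, j, k, hij, hik, hjk, rfl⟩] using
      Finset.card_le_univ ({i, j, k} : Finset (Fin n))
  have hcard (S : Finset (Fin n)) : (#Sᶜ : ℝ) = n - #S := by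
    rw [Finset.card_compl, Fintype.card_fin, Nat.cast_sub (by simpa using Finset.card_le_univ S)]
  have hi : i ∈ ({j, k}ᶜ : Finset (Fin n)) := by simp [hij, hik]
  have hk₁ : k ∉ ({i, j} : Finset (Fin n)) := by simp [hik.symm, hjk.symm]
  have hk₂ : k ∉ ({j} : Finset (Fin n)) := by simp [hjk.symm]
  -- the weights `n - 2` and `n - 1` cancel the contributions of the points outside `{i, j, k}`
  have hmem := sub_mem
    (Submodule.smul_mem _ ((n : ℝ) - 2)
      (sum_smul_pairVec_mem_vectorSpan (twoClusters_surjective (a := j) (by simp) hk₁) j k))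
    (Submodule.smul_mem _ ((n : ℝ) - 1)
      (sum_smul_pairVec_mem_vectorSpan (twoClusters_surjective (a := j) (by simp) hk₂) j k))
  rw [Finset.smul_sum, Finset.smul_sum, ← Finset.sum_sub_distrib] at hmem
  refine Submodule.mem_of_sum_ite_smul_mem hi (t := (n : ℝ) / 2) (by positivity)
    (v := fun x => pairVec j x - pairVec k x) ?_
  convert hmem using 2 with x hx
  simp only [Finset.mem_compl, Finset.mem_insert, Finset.mem_singleton, not_or] at hx
  rw [smul_smul, smul_smul, ← sub_smul]
  congr 1
  rw [clusterWeight_eq_of_fiber_eq (filter_twoClusters_eq_of_mem (by simp)),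
    clusterWeight_eq_of_fiber_eq (filter_twoClusters_eq_of_notMem hk₁),
    clusterWeight_eq_of_fiber_eq (filter_twoClusters_eq_of_mem (by simp)),
    clusterWeight_eq_of_fiber_eq (filter_twoClusters_eq_of_notMem hk₂),
    hcard, hcard, Finset.card_pair hij, Finset.card_singleton]
  have : (n : ℝ) - 2 ≠ 0 := by rw [sub_ne_zero]; norm_cast; omega
  have : (n : ℝ) - 1 ≠ 0 := by rw [sub_ne_zero]; norm_cast; omega
  by_cases hxi : x = i <;>
    simp only [hxi, hij, hx.1, Finset.mem_compl, Finset.mem_insert, Finset.mem_singleton,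
      or_false, or_self, not_true_eq_false, not_false_eq_true, ↓reduceIte, Nat.cast_ofNat,
      Nat.cast_one, sub_zero, zero_sub] <;>
    field_simp <;> ring

lemma pairVec_sub_pairVec_mem_vectorSpan (hK2 : 2 ≤ K) (hKn : K ≤ n - 1) {i j k : Fin n}
    (hij : i ≠ j) (hik : i ≠ k) (hjk : j ≠ k) :
    pairVec j i - pairVec k i ∈ vectorSpan ℝ (ratioCutVerts n K) := by
  obtain rfl | hK3 := eq_or_lt_of_le hK2
  · exact pairVec_sub_pairVec_mem_vectorSpan_two hij hik hjk
  · exact pairVec_sub_pairVec_mem_vectorSpan_of_three_le hK3 hKn hij hik hjk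

lemma pairVec_sub_pairVec_mem_vectorSpan_of_ne (hK2 : 2 ≤ K) (hKn : K ≤ n - 1)
    {a b u v : Fin n} (hab : a ≠ b) (huv : u ≠ v) :
    pairVec a b - pairVec u v ∈ vectorSpan ℝ (ratioCutVerts n K) := by
  have hcommon {x y z : Fin n} (hxy : x ≠ y) (hxz : x ≠ z) :
      pairVec x y - pairVec x z ∈ vectorSpan ℝ (ratioCutVerts n K) := by
    obtain rfl | hyz := eq_or_ne y z
    · simp
    rw [pairVec_comm x, pairVec_comm x]
    exact pairVec_sub_pairVec_mem_vectorSpan hK2 hKn hxy hxz hyz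
  obtain rfl | hau := eq_or_ne a u
  · exact hcommon hab huv
  have hu := hcommon hau.symm huv
  rw [pairVec_comm u a] at hu
  rw [← sub_add_sub_cancel _ (pairVec a u)]
  exact add_mem (hcommon hab hau) hu

lemma vectorSpan_ratioCutVerts (hK2 : 2 ≤ K) (hKn : K ≤ n - 1) :
    vectorSpan ℝ (ratioCutVerts n K) = LinearMap.ker (coordSum ℝ (PairIdx n)) := by
  apply le_antisymm
  · rw [vectorSpan_def, Submodule.span_le]
    rintro _ ⟨_, ⟨c, hc, rfl⟩, _, ⟨c', hc', rfl⟩, rfl⟩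
    simp [coordSum_apply, sum_cutVec hc, sum_cutVec hc']
  · intro Y hY
    refine Submodule.mem_of_sum_eq_zero (fun p q => ?_) (by rwa [← coordSum_apply])
    rw [← pairVec_eq_single, ← pairVec_eq_single]
    exact pairVec_sub_pairVec_mem_vectorSpan_of_ne hK2 hKn (ne_of_lt p.2) (ne_of_lt q.2)

end vectorSpan

theorem stmt2_general (n K : ℕ) (hK2 : 2 ≤ K) (hKn : K ≤ n - 1) :
    (affineSpan ℝ (RCutEq n K) : Set (CutSpace n)) =
      {X : CutSpace n | ∑ p : PairIdx n, X p = ((n : ℝ) - K) / 2} ∧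
    Module.finrank ℝ (affineSpan ℝ (RCutEq n K)).direction = n * (n - 1) / 2 - 1 := by
  obtain ⟨c, hc⟩ := Fin.exists_surjective_of_le (n := n) (K := K) (by omega) (by omega)
  have hX : cutVec n K c ∈ ratioCutVerts n K := ⟨c, hc, rfl⟩
  have hspan := vectorSpan_ratioCutVerts hK2 hKn
  have : Nonempty (PairIdx n) := ⟨⟨(⟨0, by omega⟩, ⟨1, by omega⟩), Fin.mk_lt_mk.2 one_pos⟩⟩
  rw [RCutEq_eq_convexHull, affineSpan_convexHull, direction_affineSpan, hspan,
    finrank_ker_coordSum, card_pairIdx,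
    AffineSubspace.coe_affineSpan_eq_of_vectorSpan_eq_ker _ hX hspan]
  simp [coordSum_apply, sum_cutVec hc]

/-- for n ≥ 3 and 2 ≤ K ≤ n−1, the affine hull of RCut^{=K}_n is the
hyperplane {X : ∑_{i<j} X_{ij} = (n−K)/2}; in particular its dimension is
n(n−1)/2 − 1. -/
theorem stmt2 (n K : ℕ) (hn : 3 ≤ n) (hK2 : 2 ≤ K) (hKn : K ≤ n - 1) :
    (affineSpan ℝ (RCutEq n K) : Set (CutSpace n)) =
      {X : CutSpace n | ∑ p : PairIdx n, X p = ((n : ℝ) - K) / 2} ∧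
    Module.finrank ℝ (affineSpan ℝ (RCutEq n K)).direction = n * (n - 1) / 2 - 1 :=
  stmt2_general n K hK2 hKn
end

section
/- Let n ≥ 3 and 2 ≤ K ≤ n be integers, let i ≠ j ∈ [n], and let T ⊆ [n]∖{i,j} with |T| ≥ 2. For X ∈ ℝ^{n(n−1)/2} write X_{ii} := 1 − ∑_{k∈[n]∖{i}} X_{ik} and X_{jj} := 1 − ∑_{k∈[n]∖{j}} X_{jk}. Then every point X of RCut^K_n satisfies ∑_{k∈T} (X_{ik} + X_{jk}) − X_{ij} ≤ X_{ii} + X_{jj} + ∑_{k,l∈T, k<l} X_{kl}. -/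
/-!
The inequality is affine in `X`, so it suffices to check it at the ratio-cut vectors. There,
with `Γ_i` the cluster of `i`, `X_{ii} = 1/|Γ_i|`, `∑_{k ∈ T} X_{ik} = |T ∩ Γ_i|/|Γ_i|` and the
pairs inside `T ∩ Γ_i` contribute `(|T ∩ Γ_i| choose 2)/|Γ_i|` to `∑_{k<l ∈ T} X_{kl}`. If `i` and
`j` lie in different clusters the inequality reduces to `a ≤ 1 + (a choose 2)` for `a = |T ∩ Γ_i|`
and the same for `j`; if they share a cluster, to `2a ≤ 3 + (a choose 2)`.
-/

open Finset

section PairSums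

variable {n : ℕ}

lemma ent_of_lt (X : CutSpace n) {u v : Fin n} (h : u < v) : ent X u v = X ⟨(u, v), h⟩ :=
  dif_pos h

lemma ent_comm (X : CutSpace n) (u v : Fin n) : ent X u v = ent X v u := by
  unfold ent; split_ifs <;> first | rfl | omega

noncomputable def entLinearMap (u v : Fin n) : CutSpace n →ₗ[ℝ] ℝ where
  toFun X := ent X u v
  map_add' X Y := by unfold ent; split_ifs <;> simp
  map_smul' a X := by unfold ent; split_ifs <;> simp

def pairsIn (T : Finset (Fin n)) : Finset (PairIdx n) :=
  univ.filter fun p => p.1.1 ∈ T ∧ p.1.2 ∈ T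

lemma pairSumOn_eq_sum_pairsIn (X : CutSpace n) (T : Finset (Fin n)) :
    pairSumOn X T = ∑ p ∈ pairsIn T, X p :=
  (sum_filter _ _).symm

lemma card_pairsIn (T : Finset (Fin n)) : #(pairsIn T) = (#T).choose 2 := by
  rw [← card_product_filter_lt, ← card_map (Function.Embedding.subtype _)]
  congr 1
  ext ⟨u, v⟩
  simp [pairsIn, and_comm]

lemma pairsIn_mono {A T : Finset (Fin n)} (h : A ⊆ T) : pairsIn A ⊆ pairsIn T :=
  monotone_filter_right _ fun _ _ => And.imp (@h _) (@h _)

lemma disjoint_pairsIn {A B : Finset (Fin n)} (h : Disjoint A B) :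
    Disjoint (pairsIn A) (pairsIn B) :=
  disjoint_filter.mpr fun _ _ hA hB => disjoint_left.mp h hA.1 hB.1

noncomputable def pairSumOnLinearMap (T : Finset (Fin n)) : CutSpace n →ₗ[ℝ] ℝ where
  toFun X := pairSumOn X T
  map_add' X Y := by simp only [pairSumOn_eq_sum_pairsIn, Pi.add_apply, sum_add_distrib]
  map_smul' a X := by simp [pairSumOn_eq_sum_pairsIn, mul_sum]

variable {X : CutSpace n} {A B T : Finset (Fin n)}

lemma pairSumOn_mono (hX : 0 ≤ X) (h : A ⊆ T) : pairSumOn X A ≤ pairSumOn X T := by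
  simp only [pairSumOn_eq_sum_pairsIn]
  exact sum_le_sum_of_subset_of_nonneg (pairsIn_mono h) fun p _ _ => hX p

lemma pairSumOn_add_le (hX : 0 ≤ X) (hAB : Disjoint A B) (hA : A ⊆ T) (hB : B ⊆ T) :
    pairSumOn X A + pairSumOn X B ≤ pairSumOn X T := by
  simp only [pairSumOn_eq_sum_pairsIn]
  rw [← sum_union (disjoint_pairsIn hAB)]
  exact sum_le_sum_of_subset_of_nonneg
    (union_subset (pairsIn_mono hA) (pairsIn_mono hB)) fun p _ _ => hX p

end PairSums

section RatioCutVector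

variable {n K : ℕ} (c : Fin n → Fin K)

def cluster (v : Fin n) : Finset (Fin n) :=
  univ.filter fun u => c u = c v

lemma cluster_congr {u v : Fin n} (h : c u = c v) : cluster c u = cluster c v := by
  simp only [cluster, h]

lemma card_cluster_pos (v : Fin n) : 0 < #(cluster c v) :=
  card_pos.mpr ⟨v, by simp [cluster]⟩

lemma cutVec_nonneg : 0 ≤ cutVec n K c := fun p => by
  unfold cutVec; split_ifs <;> positivity

lemma ent_cutVec {u v : Fin n} (huv : u ≠ v) :
    ent (cutVec n K c) u v = if c u = c v then (#(cluster c u) : ℝ)⁻¹ else 0 := by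
  rcases huv.lt_or_gt with h | h
  · simp [ent_of_lt _ h, cutVec, cluster]
  · rw [ent_comm, ent_of_lt _ h]
    by_cases hc : c u = c v
    · simp [cutVec, hc, cluster]
    · simp [cutVec, hc, Ne.symm hc]

lemma sum_ent_cutVec {i : Fin n} {S : Finset (Fin n)} (hi : i ∉ S) :
    ∑ k ∈ S, ent (cutVec n K c) i k
      = #(S.filter fun k => c k = c i) * (#(cluster c i) : ℝ)⁻¹ := by
  rw [sum_congr rfl fun k hk => ent_cutVec c (ne_of_mem_of_not_mem hk hi).symm,
    ← sum_filter, sum_const, nsmul_eq_mul]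
  simp only [eq_comm]

lemma one_sub_sum_ent_cutVec (i : Fin n) :
    1 - ∑ k ∈ univ.erase i, ent (cutVec n K c) i k = (#(cluster c i) : ℝ)⁻¹ := by
  have hcard : #((univ.erase i).filter fun k => c k = c i) = #(cluster c i) - 1 := by
    rw [filter_erase, card_erase_of_mem (by simp)]
    rfl
  have hpos : (0 : ℝ) < #(cluster c i) := by exact_mod_cast card_cluster_pos c i
  rw [sum_ent_cutVec c (notMem_erase i univ), hcard,
    Nat.cast_sub (card_cluster_pos c i)]
  field_simp
  ring

lemma pairSumOn_cutVec {i : Fin n} {A : Finset (Fin n)} (hA : A ⊆ cluster c i) :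
    pairSumOn (cutVec n K c) A = (#A).choose 2 * (#(cluster c i) : ℝ)⁻¹ := by
  have hmem : ∀ {k}, k ∈ A → c k = c i := fun hk => (mem_filter.mp (hA hk)).2
  rw [pairSumOn_eq_sum_pairsIn, ← card_pairsIn, ← nsmul_eq_mul, ← sum_const]
  refine sum_congr rfl fun p hp => ?_
  obtain ⟨-, h₁, h₂⟩ := mem_filter.mp hp
  simp [cutVec, hmem h₁, hmem h₂, cluster]

end RatioCutVector

lemma succ_choose_two (a : ℕ) : (a + 1).choose 2 = a + a.choose 2 :=
  (Nat.choose_succ_succ' a 1).trans (by rw [Nat.choose_one_right])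

lemma le_one_add_choose_two (a : ℕ) : a ≤ 1 + a.choose 2 := by
  cases a with
  | zero => simp
  | succ a => rw [succ_choose_two]; omega

lemma two_mul_le_three_add_choose_two (a : ℕ) : 2 * a ≤ 3 + a.choose 2 := by
  cases a with
  | zero => simp
  | succ a =>
    rw [succ_choose_two]
    have := le_one_add_choose_two a
    omega

lemma cutVec_ineq {n K : ℕ} (c : Fin n → Fin K) {i j : Fin n} (hij : i ≠ j)
    {T : Finset (Fin n)} (hiT : i ∉ T) (hjT : j ∉ T) :
    (∑ k ∈ T, (ent (cutVec n K c) i k + ent (cutVec n K c) j k)) - ent (cutVec n K c) i j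
      ≤ (1 - ∑ k ∈ univ.erase i, ent (cutVec n K c) i k)
        + (1 - ∑ k ∈ univ.erase j, ent (cutVec n K c) j k)
        + pairSumOn (cutVec n K c) T := by
  rw [sum_add_distrib, sum_ent_cutVec c hiT, sum_ent_cutVec c hjT,
    one_sub_sum_ent_cutVec, one_sub_sum_ent_cutVec, ent_cutVec c hij]
  set A := T.filter fun k => c k = c i
  set B := T.filter fun k => c k = c j
  have hA : A ⊆ cluster c i := filter_subset_filter _ (subset_univ T)
  have hB : B ⊆ cluster c j := filter_subset_filter _ (subset_univ T)
  have hti : (0 : ℝ) ≤ (#(cluster c i) : ℝ)⁻¹ := by positivity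
  have htj : (0 : ℝ) ≤ (#(cluster c j) : ℝ)⁻¹ := by positivity
  split_ifs with hc
  · have hBA : B = A := by simp only [A, B, hc]
    have hP := pairSumOn_mono (cutVec_nonneg c) (filter_subset _ T : A ⊆ T)
    rw [pairSumOn_cutVec c hA] at hP
    have ha : (2 * #A : ℝ) ≤ 3 + (#A).choose 2 := by
      exact_mod_cast two_mul_le_three_add_choose_two #A
    rw [hBA, cluster_congr c hc.symm]
    linarith [mul_le_mul_of_nonneg_right ha hti]
  · have hAB : Disjoint A B := disjoint_filter.mpr fun k _ hki hkj => hc (hki.symm.trans hkj)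
    have hP := pairSumOn_add_le (cutVec_nonneg c) hAB (filter_subset _ T) (filter_subset _ T)
    rw [pairSumOn_cutVec c hA, pairSumOn_cutVec c hB] at hP
    have ha : (#A : ℝ) ≤ 1 + (#A).choose 2 := by exact_mod_cast le_one_add_choose_two #A
    have hb : (#B : ℝ) ≤ 1 + (#B).choose 2 := by exact_mod_cast le_one_add_choose_two #B
    linarith [mul_le_mul_of_nonneg_right ha hti, mul_le_mul_of_nonneg_right hb htj]

theorem stmt8_general (n K : ℕ)
    (i j : Fin n) (hij : i ≠ j) (T : Finset (Fin n)) (hiT : i ∉ T) (hjT : j ∉ T) :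
    ∀ X ∈ RCut n K,
      (∑ k ∈ T, (ent X i k + ent X j k)) - ent X i j
        ≤ (1 - ∑ k ∈ Finset.univ.erase i, ent X i k)
          + (1 - ∑ k ∈ Finset.univ.erase j, ent X j k)
          + pairSumOn X T := by
  let φ : CutSpace n →ₗ[ℝ] ℝ :=
    ∑ k ∈ T, (entLinearMap i k + entLinearMap j k) - entLinearMap i j
      + ∑ k ∈ univ.erase i, entLinearMap i k + ∑ k ∈ univ.erase j, entLinearMap j k
      - pairSumOnLinearMap T
  have hφ : ∀ X, φ X = (∑ k ∈ T, (ent X i k + ent X j k)) - ent X i j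
      + ∑ k ∈ univ.erase i, ent X i k + ∑ k ∈ univ.erase j, ent X j k - pairSumOn X T := by
    intro X
    simp [φ, entLinearMap, pairSumOnLinearMap]
  intro X hX
  have hvert : ∀ Y ∈ {Y | ∃ c : Fin n → Fin K, Y = cutVec n K c}, φ Y ≤ 2 := by
    rintro _ ⟨c, rfl⟩
    linarith [hφ (cutVec n K c), cutVec_ineq c hij hiT hjT]
  have hX2 : φ X ≤ 2 := convexHull_min hvert (convex_halfSpace_le φ.isLinear 2) hX
  linarith [hφ X]

/-- for i ≠ j and T ⊆ [n]∖{i,j} with |T| ≥ 2, writing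
X_{ii} := 1 − ∑_{k≠i} X_{ik} (and similarly for j), every X ∈ RCut^K_n satisfies
∑_{k∈T} (X_{ik} + X_{jk}) − X_{ij} ≤ X_{ii} + X_{jj} + ∑_{k<l∈T} X_{kl}. -/
theorem stmt8 (n K : ℕ) (hn : 3 ≤ n) (hK2 : 2 ≤ K) (hKn : K ≤ n)
    (i j : Fin n) (hij : i ≠ j) (T : Finset (Fin n)) (hiT : i ∉ T) (hjT : j ∉ T)
    (hT : 2 ≤ T.card) :
    ∀ X ∈ RCut n K,
      (∑ k ∈ T, (ent X i k + ent X j k)) - ent X i j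
        ≤ (1 - ∑ k ∈ Finset.univ.erase i, ent X i k)
          + (1 - ∑ k ∈ Finset.univ.erase j, ent X j k)
          + pairSumOn X T :=
  stmt8_general n K i j hij T hiT hjT
end
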